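/- arXiv:2008.10120 — 3 statements merged into one kernel-verified Lean document; each statement's English description precedes it below -/
import Mathlib

section
/- Let b₀, b₁ : ℝ → ℂ be bounded continuous π-periodic functions. There exist constants α, β ≥ 0, depending only on sup|b₀| and sup|b₁|, such that for every θ ∈ [−π, π] and every twice continuously differentiable π-periodic function u : ℝ → ℂ, one has (∫_0^π |b₁(y)(iθ u(y) + π u'(y)) + b₀(y) u(y)|² dy)^{1/2} ≤ α (∫_0^π |u(y)|² dy)^{1/2} + β (∫_0^π |π² u''(y) + 2iθπ u'(y) + (4π² − θ²) u(y)|² dy)^{1/2}. -/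
/-!
Write `D = iθ + π∂` and `ℒ⁰ = D² + 4π²`. On `π`-periodic functions `D` is skew-adjoint, so
`‖Du‖² = |⟨u, D²u⟩| ≤ ‖u‖ (‖ℒ⁰u‖ + 4π² ‖u‖)`, and AM–GM turns this into
`‖Du‖ ≤ (‖u‖ + ‖ℒ⁰u‖) / 2 + 2π ‖u‖`. The multipliers `b₀`, `b₁` then only contribute their sup
bounds, giving `α = K₀ + K₁ (1/2 + 2π)` and `β = K₁ / 2` (with each `K` replaced by `max K 0`, to
keep `α, β ≥ 0`).
-/

open MeasureTheory Real Complex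

section LpNorm

variable {α E : Type*} [MeasurableSpace α] {μ : Measure α} [NormedAddCommGroup E]

lemma lpNorm_two_eq_sqrt_integral {f : α → E} (hf : AEStronglyMeasurable f μ) :
    lpNorm f 2 μ = √(∫ x, ‖f x‖ ^ 2 ∂μ) := by
  rw [lpNorm_eq_integral_norm_rpow_toReal two_ne_zero ENNReal.ofNat_ne_top hf, Real.sqrt_eq_rpow]
  norm_num

lemma integral_norm_mul_norm_le_lpNorm_two {f g : α → E} (hf : MemLp f 2 μ) (hg : MemLp g 2 μ) :
    ∫ x, ‖f x‖ * ‖g x‖ ∂μ ≤ lpNorm f 2 μ * lpNorm g 2 μ := by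
  have h := integral_mul_norm_le_Lp_mul_Lq Real.HolderConjugate.two_two
    (by simpa using hf) (by simpa using hg)
  rwa [lpNorm_eq_integral_norm_rpow_toReal two_ne_zero ENNReal.ofNat_ne_top hf.1,
    lpNorm_eq_integral_norm_rpow_toReal two_ne_zero ENNReal.ofNat_ne_top hg.1, ENNReal.toReal_ofNat,
    ← one_div]

lemma lpNorm_mul_le_of_norm_le {𝕜 : Type*} [NormedRing 𝕜] {p : ENNReal} {b f : α → 𝕜} {K : ℝ}
    (hK : 0 ≤ K) (hb : ∀ x, ‖b x‖ ≤ K) (hf : MemLp f p μ) :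
    lpNorm (b * f) p μ ≤ K * lpNorm f p μ := by
  calc lpNorm (b * f) p μ ≤ lpNorm (K • fun x => ‖f x‖) p μ :=
        lpNorm_mono_real (hf.norm.const_smul K) fun x =>
          (norm_mul_le _ _).trans (mul_le_mul_of_nonneg_right (hb x) (norm_nonneg _))
    _ = K * lpNorm f p μ := by
        rw [lpNorm_const_smul, lpNorm_norm hf.1, Real.nnnorm_of_nonneg hK]; rfl

end LpNorm

lemma sqrt_intervalIntegral_norm_sq_eq_lpNorm {E : Type*} [NormedAddCommGroup E] {a b : ℝ}
    (hab : a ≤ b) {f : ℝ → E} (hf : AEStronglyMeasurable f (volume.restrict (Set.Ioc a b))) :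
    √(∫ y in a..b, ‖f y‖ ^ 2) = lpNorm f 2 (volume.restrict (Set.Ioc a b)) := by
  rw [intervalIntegral.integral_of_le hab, lpNorm_two_eq_sqrt_integral hf]

lemma Continuous.memLp_restrict_Ioc {E : Type*} [NormedAddCommGroup E] {f : ℝ → E}
    (hf : Continuous f) (p : ENNReal) (a b : ℝ) : MemLp f p (volume.restrict (Set.Ioc a b)) := by
  obtain ⟨C, hC⟩ := (isCompact_Icc (a := a) (b := b)).exists_bound_of_continuousOn hf.continuousOn
  exact MemLp.of_bound hf.aestronglyMeasurable C
    (ae_restrict_of_forall_mem measurableSet_Ioc fun x hx => hC x (Set.Ioc_subset_Icc_self hx))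

lemma Function.Periodic.deriv {𝕜 F : Type*} [NontriviallyNormedField 𝕜] [NormedAddCommGroup F]
    [NormedSpace 𝕜 F] {f : 𝕜 → F} {c : 𝕜} (hf : Function.Periodic f c) :
    Function.Periodic (deriv f) c := fun x => by
  rw [← deriv_comp_add_const, show (fun x => f (x + c)) = f from funext hf]

lemma le_add_mul_of_sq_le_mul {x a b c : ℝ} (ha : 0 ≤ a) (hb : 0 ≤ b) (hc : 0 ≤ c)
    (h : x ^ 2 ≤ a * (b + c ^ 2 * a)) : x ≤ (a + b) / 2 + c * a :=
  le_of_pow_le_pow_left₀ two_ne_zero (by positivity) <| h.trans <| by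
    nlinarith [sq_nonneg (a - b), mul_nonneg hc (mul_nonneg ha hb),
      mul_nonneg hc (mul_nonneg ha ha)]

/-- `blochDeriv θ = iθ + π∂_y` and `blochL₀ θ = ℒ_θ⁰ = (iθ + π∂_y)² + 4π²`. -/
noncomputable def blochDeriv (θ : ℝ) (u : ℝ → ℂ) (y : ℝ) : ℂ :=
  I * θ * u y + π * deriv u y

noncomputable def blochL₀ (θ : ℝ) (u : ℝ → ℂ) (y : ℝ) : ℂ :=
  π ^ 2 * deriv (deriv u) y + 2 * I * θ * π * deriv u y + (4 * π ^ 2 - θ ^ 2) * u y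

section Bloch

variable {θ : ℝ} {u : ℝ → ℂ}

lemma ContDiff.blochDeriv {n : ℕ} (hu : ContDiff ℝ (n + 1) u) (θ : ℝ) :
    ContDiff ℝ n (blochDeriv θ u) :=
  (contDiff_const.mul (hu.of_le le_self_add)).add
    (contDiff_const.mul (contDiff_succ_iff_deriv.mp hu).2.2)

lemma blochDeriv_blochDeriv (hu : ContDiff ℝ 2 u) :
    blochDeriv θ (blochDeriv θ u) = blochL₀ θ u - (4 * π ^ 2 : ℂ) • u := by
  have hu' : ContDiff ℝ 1 (deriv u) := (contDiff_succ_iff_deriv.mp hu).2.2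
  funext y
  have hD : HasDerivAt (blochDeriv θ u) (I * θ * deriv u y + π * deriv (deriv u) y) y :=
    (((hu.differentiable two_ne_zero) y).hasDerivAt.const_mul _).add
      (((hu'.differentiable one_ne_zero) y).hasDerivAt.const_mul _)
  simp only [blochDeriv, blochL₀, hD.deriv, Pi.sub_apply, Pi.smul_apply, smul_eq_mul]
  ring_nf
  rw [I_sq]
  ring

lemma ContDiff.continuous_blochL₀ (hu : ContDiff ℝ 2 u) (θ : ℝ) : Continuous (blochL₀ θ u) := by
  have hu' : ContDiff ℝ 1 (deriv u) := (contDiff_succ_iff_deriv.mp hu).2.2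
  have h1 : Continuous (deriv u) := hu'.continuous
  have h2 : Continuous (deriv (deriv u)) := hu'.continuous_deriv le_rfl
  have h0 : Continuous u := hu.continuous
  unfold blochL₀
  fun_prop

lemma integral_star_blochDeriv_mul {a b : ℝ} {f g : ℝ → ℂ} (hf : ContDiff ℝ 1 f)
    (hg : ContDiff ℝ 1 g) (hfab : f b = f a) (hgab : g b = g a) :
    ∫ y in a..b, star (blochDeriv θ f y) * g y = -∫ y in a..b, star (f y) * blochDeriv θ g y := by
  have hderiv : ∀ y, HasDerivAt (fun y => star (f y) * g y)
      (star (deriv f y) * g y + star (f y) * deriv g y) y := fun y =>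
    (hf.differentiable one_ne_zero y).hasDerivAt.star.mul
      (hg.differentiable one_ne_zero y).hasDerivAt
  have hcont : Continuous fun y => star (deriv f y) * g y + star (f y) * deriv g y :=
    ((hf.continuous_deriv le_rfl).star.mul hg.continuous).add
      (hf.continuous.star.mul (hg.continuous_deriv le_rfl))
  have hDf : Continuous (blochDeriv θ f) :=
    (ContDiff.blochDeriv (n := 0) (by simpa using hf) θ).continuous
  have hDg : Continuous (blochDeriv θ g) :=
    (ContDiff.blochDeriv (n := 0) (by simpa using hg) θ).continuous
  -- the `iθ` terms cancel, leaving `π` times the derivative of `star f * g`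
  have hpointwise : ∀ y, star (blochDeriv θ f y) * g y + star (f y) * blochDeriv θ g y =
      π * (star (deriv f y) * g y + star (f y) * deriv g y) := fun y => by
    simp only [blochDeriv, star_add, star_mul', star_def, conj_I, conj_ofReal]
    ring
  have htotal :
      ∫ y in a..b, (star (blochDeriv θ f y) * g y + star (f y) * blochDeriv θ g y) = 0 := by
    simp_rw [hpointwise]
    rw [intervalIntegral.integral_const_mul, intervalIntegral.integral_eq_sub_of_hasDerivAt
      (fun y _ => hderiv y) (hcont.intervalIntegrable _ _), hfab, hgab, sub_self, mul_zero]
  have hI₁ : IntervalIntegrable (fun y => star (blochDeriv θ f y) * g y) volume a b :=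
    (hDf.star.mul hg.continuous).intervalIntegrable _ _
  have hI₂ : IntervalIntegrable (fun y => star (f y) * blochDeriv θ g y) volume a b :=
    (hf.continuous.star.mul hDg).intervalIntegrable _ _
  rw [intervalIntegral.integral_add hI₁ hI₂] at htotal
  exact eq_neg_of_add_eq_zero_left htotal

lemma lpNorm_blochDeriv_sq_le {a b : ℝ} (hab : a ≤ b) (hu : ContDiff ℝ 2 u) (hu_ab : u b = u a)
    (hu'_ab : deriv u b = deriv u a) :
    lpNorm (blochDeriv θ u) 2 (volume.restrict (Set.Ioc a b)) ^ 2 ≤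
      lpNorm u 2 (volume.restrict (Set.Ioc a b)) *
        lpNorm (blochDeriv θ (blochDeriv θ u)) 2 (volume.restrict (Set.Ioc a b)) := by
  have hDu : ContDiff ℝ 1 (blochDeriv θ u) := hu.blochDeriv (n := 1) θ
  have hDDu : Continuous (blochDeriv θ (blochDeriv θ u)) :=
    (ContDiff.blochDeriv (n := 0) (by simpa using hDu) θ).continuous
  have hDu_ab : blochDeriv θ u b = blochDeriv θ u a := by simp only [blochDeriv, hu_ab, hu'_ab]
  calc lpNorm (blochDeriv θ u) 2 (volume.restrict (Set.Ioc a b)) ^ 2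
      = ∫ y in a..b, ‖blochDeriv θ u y‖ ^ 2 := by
        rw [← sqrt_intervalIntegral_norm_sq_eq_lpNorm hab hDu.continuous.aestronglyMeasurable,
          sq_sqrt (intervalIntegral.integral_nonneg hab fun _ _ => sq_nonneg _)]
    _ = ‖∫ y in a..b, star (blochDeriv θ u y) * blochDeriv θ u y‖ := by
        have hsq (z : ℂ) : star z * z = ((‖z‖ ^ 2 : ℝ) : ℂ) := by
          rw [star_def, conj_mul', ofReal_pow]
        simp_rw [hsq, intervalIntegral.integral_ofReal, norm_real,
          Real.norm_of_nonneg (intervalIntegral.integral_nonneg hab fun _ _ => sq_nonneg _)]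
    _ = ‖∫ y in a..b, star (u y) * blochDeriv θ (blochDeriv θ u) y‖ := by
        rw [integral_star_blochDeriv_mul (hu.of_le one_le_two) hDu hu_ab hDu_ab, norm_neg]
    _ ≤ ∫ y in a..b, ‖u y‖ * ‖blochDeriv θ (blochDeriv θ u) y‖ := by
        simpa only [norm_mul, norm_star] using
          intervalIntegral.norm_integral_le_integral_norm (μ := volume)
            (f := fun y => star (u y) * blochDeriv θ (blochDeriv θ u) y) hab
    _ ≤ _ := by
        rw [intervalIntegral.integral_of_le hab]
        exact integral_norm_mul_norm_le_lpNorm_two (hu.continuous.memLp_restrict_Ioc _ _ _)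
          (hDDu.memLp_restrict_Ioc _ _ _)

lemma lpNorm_blochDeriv_le {a b : ℝ} (hab : a ≤ b) (hu : ContDiff ℝ 2 u) (hu_ab : u b = u a)
    (hu'_ab : deriv u b = deriv u a) :
    lpNorm (blochDeriv θ u) 2 (volume.restrict (Set.Ioc a b)) ≤
      (lpNorm u 2 (volume.restrict (Set.Ioc a b)) +
          lpNorm (blochL₀ θ u) 2 (volume.restrict (Set.Ioc a b))) / 2 +
        2 * π * lpNorm u 2 (volume.restrict (Set.Ioc a b)) := by
  refine le_add_mul_of_sq_le_mul lpNorm_nonneg lpNorm_nonneg (by positivity) ?_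
  refine (lpNorm_blochDeriv_sq_le hab hu hu_ab hu'_ab).trans
    (mul_le_mul_of_nonneg_left ?_ lpNorm_nonneg)
  have hc : ((‖(4 * π ^ 2 : ℂ)‖₊ : ℝ)) = (2 * π) ^ 2 := by
    rw [coe_nnnorm, show (4 * π ^ 2 : ℂ) = ((2 * π) ^ 2 : ℝ) by push_cast; ring, norm_real,
      Real.norm_of_nonneg (by positivity)]
  rw [blochDeriv_blochDeriv hu, ← hc, ← lpNorm_const_smul]
  exact lpNorm_sub_le ((hu.continuous_blochL₀ θ).memLp_restrict_Ioc _ _ _) one_le_two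

end Bloch

theorem bloch_relative_bound
    (K₀ K₁ : ℝ) :
    ∃ α β : ℝ, 0 ≤ α ∧ 0 ≤ β ∧
      ∀ (b₀ b₁ : ℝ → ℂ), Continuous b₀ → Continuous b₁ →
        (∀ y, b₀ (y + π) = b₀ y) → (∀ y, b₁ (y + π) = b₁ y) →
        (∀ y, ‖b₀ y‖ ≤ K₀) → (∀ y, ‖b₁ y‖ ≤ K₁) →
        ∀ θ ∈ Set.Icc (-π) π, ∀ u : ℝ → ℂ, ContDiff ℝ 2 u →
          (∀ y, u (y + π) = u y) →
          Real.sqrt (∫ y in (0:ℝ)..π,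
              ‖b₁ y * (Complex.I * (θ : ℂ) * u y + (π : ℂ) * deriv u y)
                + b₀ y * u y‖ ^ 2)
            ≤ α * Real.sqrt (∫ y in (0:ℝ)..π, ‖u y‖ ^ 2)
              + β * Real.sqrt (∫ y in (0:ℝ)..π,
                  ‖(π : ℂ) ^ 2 * deriv (deriv u) y
                    + 2 * Complex.I * (θ : ℂ) * (π : ℂ) * deriv u y
                    + ((4 * (π : ℂ) ^ 2 - (θ : ℂ) ^ 2)) * u y‖ ^ 2) := by
  set C₀ := max K₀ 0
  set C₁ := max K₁ 0
  refine ⟨C₀ + C₁ / 2 + 2 * π * C₁, C₁ / 2, by positivity, by positivity, ?_⟩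
  intro b₀ b₁ hb₀ hb₁ _ _ hK₀ hK₁ θ _ u hu hper
  have hu₀ : Continuous u := hu.continuous
  have hDu : Continuous (blochDeriv θ u) := (hu.blochDeriv (n := 1) θ).continuous
  have hL : Continuous (blochL₀ θ u) := hu.continuous_blochL₀ θ
  change √(∫ y in (0:ℝ)..π, ‖(b₁ * blochDeriv θ u + b₀ * u) y‖ ^ 2) ≤
    _ * √(∫ y in (0:ℝ)..π, ‖u y‖ ^ 2) + _ * √(∫ y in (0:ℝ)..π, ‖blochL₀ θ u y‖ ^ 2)
  rw [sqrt_intervalIntegral_norm_sq_eq_lpNorm pi_pos.le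
      ((hb₁.mul hDu).add (hb₀.mul hu₀)).aestronglyMeasurable,
    sqrt_intervalIntegral_norm_sq_eq_lpNorm pi_pos.le hu₀.aestronglyMeasurable,
    sqrt_intervalIntegral_norm_sq_eq_lpNorm pi_pos.le hL.aestronglyMeasurable]
  set μ := volume.restrict (Set.Ioc 0 π)
  have hDu_le := lpNorm_blochDeriv_le (θ := θ) pi_pos.le hu (by simpa using hper 0)
    (by simpa using Function.Periodic.deriv hper 0)
  calc _ ≤ C₁ * lpNorm (blochDeriv θ u) 2 μ + C₀ * lpNorm u 2 μ :=
        (lpNorm_add_le ((hb₁.mul hDu).memLp_restrict_Ioc _ _ _) one_le_two).trans <| add_le_add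
          (lpNorm_mul_le_of_norm_le (le_max_right _ _) (fun y => (hK₁ y).trans (le_max_left _ _))
            (hDu.memLp_restrict_Ioc _ _ _))
          (lpNorm_mul_le_of_norm_le (le_max_right _ _) (fun y => (hK₀ y).trans (le_max_left _ _))
            (hu₀.memLp_restrict_Ioc _ _ _))
    _ ≤ C₁ * ((lpNorm u 2 μ + lpNorm (blochL₀ θ u) 2 μ) / 2 + 2 * π * lpNorm u 2 μ) +
          C₀ * lpNorm u 2 μ := by grw [hDu_le]
    _ = _ := by ring
end

section
/- Let b₀, b₁ : ℝ → ℝ be continuous, and suppose b₁(z) → b_∞ as z → +∞ and as z → −∞ for some b_∞ ≠ 0. Let ζ : ℝ → ℝ be twice continuously differentiable, not identically zero, satisfying ζ''(z) + b₁(z)ζ'(z) + b₀(z)ζ(z) = 0 for all z ∈ ℝ and ζ(z) → 0, ζ'(z) → 0 as z → ±∞. Then every twice continuously differentiable solution u : ℝ → ℝ of u'' + b₁u' + b₀u = 0 on ℝ such that u and u' have finite limits as z → ±∞ and u'(z) → 0 as z → ±∞ is a constant multiple of ζ: there exists k ∈ ℝ with u = kζ. -/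
/-!
The Wronskian `W = ζ u' - u ζ'` satisfies `W' = -b₁ W` and tends to `0` at both ends, since
`ζ, ζ', u' → 0` while `u` stays bounded. If `b_∞ < 0`, then `(W ^ 2)' = -2 b₁ W ^ 2 ≥ 0` near
`+∞`, so `W ^ 2`, being nondecreasing with limit `0`, vanishes somewhere; the case `b_∞ > 0` is
symmetric at `-∞`. Uniqueness for `W' = -b₁ W` then gives `W = 0`. Choosing `z₀` with
`ζ z₀ ≠ 0`, the solution `u - (u z₀ / ζ z₀) ζ` has zero value and derivative at `z₀`, so it
vanishes by uniqueness for the second-order equation.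
-/

open Filter Topology Set

theorem linear_ODE_eq_zero_of_eq_zero {E : Type*} [NormedAddCommGroup E] [NormedSpace ℝ E]
    {A : ℝ → E →L[ℝ] E} (hA : Continuous A) {Y : ℝ → E}
    (hY : ∀ t, HasDerivAt Y (A t (Y t)) t) {t₀ : ℝ} (hY₀ : Y t₀ = 0) : Y = 0 := by
  funext t
  obtain ⟨a, b, ht, ht₀⟩ : ∃ a b, t ∈ Ioo a b ∧ t₀ ∈ Ioo a b :=
    ⟨min t t₀ - 1, max t t₀ + 1, by grind, by grind⟩
  obtain ⟨K, hK⟩ := isCompact_Icc.exists_bound_of_continuousOn (hA.continuousOn (s := Icc a b))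
  refine ODE_solution_unique_of_mem_Ioo (K := K.toNNReal) (s := fun _ => univ) (g := 0)
    (fun s hs => ((A s).lipschitz.weaken ?_).lipschitzOnWith) ht₀
    (fun s _ => ⟨hY s, trivial⟩) (fun s _ => ⟨by simp, trivial⟩)
    hY₀ ht
  rw [← NNReal.coe_le_coe, coe_nnnorm, Real.coe_toNNReal']
  exact (hK s (Ioo_subset_Icc_self hs)).trans (le_max_left _ _)

/-- `y` solves `y'' + b₁ y' + b₀ y = 0`, written as a first-order system for `(y, y')`. -/
structure SolvesLinearODE (b₀ b₁ y y' : ℝ → ℝ) : Prop where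
  hasDerivAt : ∀ t, HasDerivAt y (y' t) t
  hasDerivAt_deriv : ∀ t, HasDerivAt y' (-(b₁ t * y' t) - b₀ t * y t) t

namespace SolvesLinearODE

variable {b₀ b₁ y y' z z' : ℝ → ℝ}

theorem of_contDiff (hy : ContDiff ℝ 2 y)
    (heq : ∀ t, deriv (deriv y) t + b₁ t * deriv y t + b₀ t * y t = 0) :
    SolvesLinearODE b₀ b₁ y (deriv y) := by
  have hy' : ContDiff ℝ 1 (deriv y) := hy.iterate_deriv' 1 1
  refine ⟨fun t => (hy.differentiable two_ne_zero t).hasDerivAt, fun t => ?_⟩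
  rw [show -(b₁ t * deriv y t) - b₀ t * y t = deriv (deriv y) t by linarith [heq t]]
  exact (hy'.differentiable one_ne_zero t).hasDerivAt

theorem sub_const_mul (hy : SolvesLinearODE b₀ b₁ y y') (hz : SolvesLinearODE b₀ b₁ z z')
    (k : ℝ) : SolvesLinearODE b₀ b₁ (fun t => y t - k * z t) (fun t => y' t - k * z' t) :=
  ⟨fun t => (hy.hasDerivAt t).fun_sub ((hz.hasDerivAt t).const_mul k), fun t =>
    ((hy.hasDerivAt_deriv t).fun_sub ((hz.hasDerivAt_deriv t).const_mul k)).congr_deriv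
      (by ring)⟩

theorem eq_zero_of_eq_zero (hb₀ : Continuous b₀) (hb₁ : Continuous b₁)
    (hy : SolvesLinearODE b₀ b₁ y y') {t₀ : ℝ} (h : y t₀ = 0) (h' : y' t₀ = 0) : y = 0 := by
  let A : ℝ → ℝ × ℝ →L[ℝ] ℝ × ℝ := fun t => (ContinuousLinearMap.snd ℝ ℝ ℝ).prod
    (-b₁ t • ContinuousLinearMap.snd ℝ ℝ ℝ - b₀ t • ContinuousLinearMap.fst ℝ ℝ ℝ)
  have hA : Continuous A := (ContinuousLinearMap.prodₗᵢ ℝ).continuous.comp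
    (continuous_const.prodMk ((hb₁.neg.smul continuous_const).sub (hb₀.smul continuous_const)))
  have hY := linear_ODE_eq_zero_of_eq_zero hA (Y := fun t => (y t, y' t)) (t₀ := t₀)
    (fun t => by simpa [A] using (hy.hasDerivAt t).prodMk (hy.hasDerivAt_deriv t))
    (by simp [h, h'])
  funext t
  exact congrArg Prod.fst (congrFun hY t)

theorem hasDerivAt_wronskian (hy : SolvesLinearODE b₀ b₁ y y')
    (hz : SolvesLinearODE b₀ b₁ z z') (t : ℝ) :
    HasDerivAt (fun t => y t * z' t - z t * y' t) (-b₁ t * (y t * z' t - z t * y' t)) t :=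
  (((hy.hasDerivAt t).mul (hz.hasDerivAt_deriv t)).sub
    ((hz.hasDerivAt t).mul (hy.hasDerivAt_deriv t))).congr_deriv (by ring)

end SolvesLinearODE

section FirstOrder

variable {b W : ℝ → ℝ}

theorem exists_eq_zero_of_hasDerivAt_neg_mul_of_tendsto_atTop
    (hW : ∀ t, HasDerivAt W (-b t * W t) t) (hb : ∀ᶠ t in atTop, b t ≤ 0)
    (hW0 : Tendsto W atTop (𝓝 0)) : ∃ T, W T = 0 := by
  obtain ⟨T, hT⟩ := eventually_atTop.mp hb
  have hmono : MonotoneOn (fun t => W t ^ 2) (Ici T) := by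
    refine monotoneOn_of_hasDerivWithinAt_nonneg (convex_Ici T)
      (HasDerivAt.continuousOn fun t _ => ((hW t).pow 2))
      (fun t _ => ((hW t).pow 2).hasDerivWithinAt) fun t ht => ?_
    rw [interior_Ici] at ht
    have := hT t (le_of_lt ht)
    norm_num
    nlinarith [mul_nonneg (neg_nonneg.mpr this) (sq_nonneg (W t))]
  have hsq : W T ^ 2 ≤ 0 :=
    ge_of_tendsto (by simpa using hW0.pow 2)
      (eventually_atTop.mpr ⟨T, fun t ht => hmono (mem_Ici.mpr le_rfl) ht ht⟩)
  exact ⟨T, pow_eq_zero_iff two_ne_zero |>.mp (le_antisymm hsq (sq_nonneg _))⟩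

theorem exists_eq_zero_of_hasDerivAt_neg_mul_of_tendsto_atBot
    (hW : ∀ t, HasDerivAt W (-b t * W t) t) (hb : ∀ᶠ t in atBot, 0 ≤ b t)
    (hW0 : Tendsto W atBot (𝓝 0)) : ∃ T, W T = 0 := by
  obtain ⟨T, hT⟩ := exists_eq_zero_of_hasDerivAt_neg_mul_of_tendsto_atTop
    (b := fun t => -b (-t)) (W := fun t => W (-t))
    (fun t => ((hW (-t)).comp t (hasDerivAt_neg t)).congr_deriv (by ring))
    (tendsto_neg_atTop_atBot.eventually (hb.mono fun _ h => neg_nonpos.mpr h))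
    (hW0.comp tendsto_neg_atTop_atBot)
  exact ⟨-T, hT⟩

theorem eq_zero_of_hasDerivAt_neg_mul {L : ℝ} (hb : Continuous b) (hL : L ≠ 0)
    (hbtop : Tendsto b atTop (𝓝 L)) (hbbot : Tendsto b atBot (𝓝 L))
    (hW : ∀ t, HasDerivAt W (-b t * W t) t)
    (hWtop : Tendsto W atTop (𝓝 0)) (hWbot : Tendsto W atBot (𝓝 0)) : W = 0 := by
  obtain ⟨T, hT⟩ : ∃ T, W T = 0 := by
    rcases hL.lt_or_gt with hL | hL
    · exact exists_eq_zero_of_hasDerivAt_neg_mul_of_tendsto_atTop hW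
        (hbtop.eventually (ge_mem_nhds hL)) hWtop
    · exact exists_eq_zero_of_hasDerivAt_neg_mul_of_tendsto_atBot hW
        (hbbot.eventually (le_mem_nhds hL)) hWbot
  exact linear_ODE_eq_zero_of_eq_zero ((ContinuousLinearMap.mul ℝ ℝ).continuous.comp hb.neg)
    (fun t => by simpa using hW t) hT

end FirstOrder

theorem decaying_solution_unique_up_to_scalar
    (b₀ b₁ : ℝ → ℝ) (hb₀ : Continuous b₀) (hb₁ : Continuous b₁)
    (binf : ℝ) (hbinf : binf ≠ 0)
    (hb₁top : Tendsto b₁ atTop (𝓝 binf)) (hb₁bot : Tendsto b₁ atBot (𝓝 binf))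
    (ζ : ℝ → ℝ) (hζ : ContDiff ℝ 2 ζ) (hζne : ζ ≠ 0)
    (hζeq : ∀ z, deriv (deriv ζ) z + b₁ z * deriv ζ z + b₀ z * ζ z = 0)
    (hζtop : Tendsto ζ atTop (𝓝 0)) (hζbot : Tendsto ζ atBot (𝓝 0))
    (hζ'top : Tendsto (deriv ζ) atTop (𝓝 0)) (hζ'bot : Tendsto (deriv ζ) atBot (𝓝 0))
    (u : ℝ → ℝ) (hu : ContDiff ℝ 2 u)
    (hueq : ∀ z, deriv (deriv u) z + b₁ z * deriv u z + b₀ z * u z = 0)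
    (hutop : ∃ L : ℝ, Tendsto u atTop (𝓝 L))
    (hubot : ∃ L : ℝ, Tendsto u atBot (𝓝 L))
    (hu'top : Tendsto (deriv u) atTop (𝓝 0))
    (hu'bot : Tendsto (deriv u) atBot (𝓝 0)) :
    ∃ k : ℝ, u = fun z => k * ζ z := by
  have hζs := SolvesLinearODE.of_contDiff hζ hζeq
  have hus := SolvesLinearODE.of_contDiff hu hueq
  obtain ⟨Ltop, hLtop⟩ := hutop
  obtain ⟨Lbot, hLbot⟩ := hubot
  have hW : ∀ z, ζ z * deriv u z - u z * deriv ζ z = 0 := congrFun <|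
    eq_zero_of_hasDerivAt_neg_mul hb₁ hbinf hb₁top hb₁bot (hζs.hasDerivAt_wronskian hus)
      (by simpa using (hζtop.mul hu'top).sub (hLtop.mul hζ'top))
      (by simpa using (hζbot.mul hu'bot).sub (hLbot.mul hζ'bot))
  obtain ⟨z₀, hz₀⟩ : ∃ z₀, ζ z₀ ≠ 0 := Function.ne_iff.mp hζne
  have hdiff := (hus.sub_const_mul hζs (u z₀ / ζ z₀)).eq_zero_of_eq_zero hb₀ hb₁ (t₀ := z₀)
    (by field_simp; ring) (by field_simp; linarith [hW z₀])
  exact ⟨u z₀ / ζ z₀, funext fun z => sub_eq_zero.mp (congrFun hdiff z)⟩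
end

section
/- Let b : ℝ → ℝ be continuous with b(z) → b_∞ as z → +∞ and as z → −∞, where b_∞ ≠ 0. If w : ℝ → ℝ is continuously differentiable with w'(z) = −b(z) w(z) for all z ∈ ℝ, and w(z) → 0 both as z → +∞ and as z → −∞, then w ≡ 0. -/
/-!
Along a solution of `w' = -b w` the square `w²` has derivative `-2 b w²`, so it is nondecreasing
wherever `b ≤ 0` and nonincreasing wherever `b ≥ 0`. If `b → b∞ < 0` at `+∞`, then `w²` is
nondecreasing on a half-line `[M, ∞)` and tends to `0`, hence vanishes at `M`; the case `b∞ > 0`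
is the same argument at `-∞`, obtained by reflecting `z ↦ -z`. Finally, a zero of `w` propagates
to all of `ℝ`, because `w · exp (∫ b)` is constant.
-/

open Filter Topology

section LinearODE

variable {b w : ℝ → ℝ}

theorem eq_zero_of_hasDerivAt_neg_mul_of_eq_zero (hb : Continuous b)
    (hw : ∀ z, HasDerivAt w (-b z * w z) z) {z₀ : ℝ} (h₀ : w z₀ = 0) (z : ℝ) : w z = 0 := by
  set B : ℝ → ℝ := fun z => ∫ t in z₀..z, b t
  have hB : ∀ z, HasDerivAt B (b z) z := fun z =>
    intervalIntegral.integral_hasDerivAt_right (hb.intervalIntegrable _ _)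
      (hb.stronglyMeasurableAtFilter _ _) hb.continuousAt
  have hconst : ∀ z, HasDerivAt (fun z => w z * Real.exp (B z)) 0 z := fun z =>
    ((hw z).mul (hB z).exp).congr_deriv (by ring)
  have h := is_const_of_deriv_eq_zero (fun z => (hconst z).differentiableAt)
    (fun z => (hconst z).deriv) z z₀
  simpa [h₀, Real.exp_ne_zero] using h

theorem monotoneOn_sq_of_hasDerivAt_neg_mul (hw : ∀ z, HasDerivAt w (-b z * w z) z)
    {s : Set ℝ} (hs : Convex ℝ s) (hbs : ∀ z ∈ s, b z ≤ 0) : MonotoneOn (fun z => w z ^ 2) s := by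
  have hsq : ∀ z, HasDerivAt (fun z => w z ^ 2) (-2 * b z * w z ^ 2) z := fun z =>
    ((hw z).pow 2).congr_deriv (by ring)
  refine monotoneOn_of_deriv_nonneg hs
    (continuous_iff_continuousAt.2 fun z => (hsq z).continuousAt).continuousOn
    (fun z _ => (hsq z).differentiableAt.differentiableWithinAt) fun z hz => ?_
  rw [(hsq z).deriv]
  have := hbs z (interior_subset hz)
  nlinarith [sq_nonneg (w z)]

theorem exists_eq_zero_of_tendsto_atTop_neg (hw : ∀ z, HasDerivAt w (-b z * w z) z) {c : ℝ}
    (hb : Tendsto b atTop (𝓝 c)) (hc : c < 0) (hwtop : Tendsto w atTop (𝓝 0)) :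
    ∃ z, w z = 0 := by
  obtain ⟨M, hM⟩ := (hb.eventually (eventually_le_nhds hc)).exists_forall_of_atTop
  have hmono := monotoneOn_sq_of_hasDerivAt_neg_mul hw (convex_Ici M) fun z hz => hM z hz
  have hle : w M ^ 2 ≤ 0 := by
    refine ge_of_tendsto (by simpa using hwtop.pow 2) ?_
    filter_upwards [eventually_ge_atTop M] with z hz
    exact hmono Set.self_mem_Ici hz hz
  exact ⟨M, pow_eq_zero_iff two_ne_zero |>.1 (le_antisymm hle (sq_nonneg _))⟩

theorem exists_eq_zero_of_tendsto_atBot_pos (hw : ∀ z, HasDerivAt w (-b z * w z) z) {c : ℝ}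
    (hb : Tendsto b atBot (𝓝 c)) (hc : 0 < c) (hwbot : Tendsto w atBot (𝓝 0)) :
    ∃ z, w z = 0 := by
  have hw' : ∀ z, HasDerivAt (fun z => w (-z)) (-(-b (-z)) * w (-z)) z := fun z =>
    ((hw (-z)).scomp z (hasDerivAt_neg z)).congr_deriv (by simp)
  obtain ⟨z, hz⟩ := exists_eq_zero_of_tendsto_atTop_neg hw'
    (hb.comp tendsto_neg_atTop_atBot).neg (neg_lt_zero.2 hc) (hwbot.comp tendsto_neg_atTop_atBot)
  exact ⟨-z, hz⟩

end LinearODE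

theorem wronskian_vanishes
    (b : ℝ → ℝ) (hb : Continuous b)
    (binf : ℝ) (hbinf : binf ≠ 0)
    (hbtop : Tendsto b atTop (𝓝 binf)) (hbbot : Tendsto b atBot (𝓝 binf))
    (w : ℝ → ℝ) (hw : ContDiff ℝ 1 w)
    (hweq : ∀ z, deriv w z = -b z * w z)
    (hwtop : Tendsto w atTop (𝓝 0)) (hwbot : Tendsto w atBot (𝓝 0)) :
    ∀ z, w z = 0 := by
  have hw' : ∀ z, HasDerivAt w (-b z * w z) z := fun z =>
    hweq z ▸ (hw.differentiable one_ne_zero z).hasDerivAt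
  obtain ⟨z₀, h₀⟩ : ∃ z, w z = 0 := by
    rcases hbinf.lt_or_gt with hneg | hpos
    · exact exists_eq_zero_of_tendsto_atTop_neg hw' hbtop hneg hwtop
    · exact exists_eq_zero_of_tendsto_atBot_pos hw' hbbot hpos hwbot
  exact eq_zero_of_hasDerivAt_neg_mul_of_eq_zero hb hw' h₀
end
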